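/- arXiv:math/0210372 — 5 statements merged into one kernel-verified Lean document; each statement's English description precedes it below -/
import Mathlib

section
/- If d is a symplectic Young diagram (a partition in which every odd part occurs with even multiplicity), then the partition d - 1 obtained by deleting the first column of d is an orthogonal Young diagram (every even part occurs with even multiplicity). Conversely, if d is an orthogonal Young diagram, then d - 1 is a symplectic Young diagram. -/
lemma aux (d : Multiset ℕ) (k : ℕ) (hk : k ≠ 0) :
    (((d.map (· - 1)).filter (· ≠ 0))).count k = d.count (k+1) := by
  rw [Multiset.count_filter, if_pos hk, Multiset.count_map]
  rw [Multiset.count_eq_card_filter_eq]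
  congr 1
  apply Multiset.filter_congr
  intro x _
  constructor
  · intro h; omega
  · intro h; omega

/-- A partition is modeled as a multiset of (positive) parts.
It is *symplectic* if every odd part occurs with even multiplicity,
and *orthogonal* if every even part occurs with even multiplicity.
Deleting the first column replaces each part `d_i` by `d_i - 1`,
discarding the resulting zero parts. -/
theorem stmt0 (d : Multiset ℕ) :
    ((∀ k, Odd k → Even (d.count k)) →
      ∀ k, Even k → Even ((((d.map (· - 1)).filter (· ≠ 0))).count k)) ∧
    ((∀ k, Even k → Even (d.count k)) →
      ∀ k, Odd k → Even ((((d.map (· - 1)).filter (· ≠ 0))).count k)) := by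
  constructor
  · intro h k hk
    rcases eq_or_ne k 0 with rfl | hk0
    · rw [Multiset.count_filter, if_neg (by simp)]
      exact Even.zero
    · rw [aux d k hk0]
      exact h (k+1) (by rcases hk with ⟨m, rfl⟩; exact ⟨m, by ring⟩)
  · intro h k hk
    have hk0 : k ≠ 0 := by rintro rfl; exact (Nat.not_odd_zero) hk
    rw [aux d k hk0]
    exact h (k+1) (by rcases hk with ⟨m, rfl⟩; exact ⟨m+1, by ring⟩)
end

section
/- Let H be a Hilbert space and Φ : ℝ^n → H a continuous function such that ∫∫_{ℝ^n × ℝ^n} |⟨Φ(x), Φ(y)⟩| dx dy < ∞. Then for any increasing sequence of compact sets K_i whose union is ℝ^n, the sequence u_i = ∫_{K_i} Φ(x) dx is a Cauchy sequence in H, hence converges to a limit u ∈ H independent of the chosen sequence; moreover ⟨u, u⟩ = ∫∫_{ℝ^n × ℝ^n} ⟨Φ(x), Φ(y)⟩ dx dy. -/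
open MeasureTheory Filter RealInnerProductSpace

section Stmt8Aux

variable {n : ℕ} {H : Type*} [NormedAddCommGroup H] [InnerProductSpace ℝ H] [CompleteSpace H]

local notation "E" => EuclideanSpace ℝ (Fin n)

lemma stmt8_inner_setIntegral (Φ : E → H) (hΦ : Continuous Φ)
    (hf : Integrable (fun p : E × E => ⟪Φ p.1, Φ p.2⟫))
    {B C : Set E} (hB : IsCompact B) (hC : IsCompact C) :
    ⟪∫ x in B, Φ x, ∫ x in C, Φ x⟫ = ∫ p in B ×ˢ C, ⟪Φ p.1, Φ p.2⟫ := by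
  have hΦB : IntegrableOn Φ B := hΦ.continuousOn.integrableOn_compact hB
  have hΦC : IntegrableOn Φ C := hΦ.continuousOn.integrableOn_compact hC
  have h1 : ⟪∫ x in B, Φ x, ∫ x in C, Φ x⟫ = ∫ x in B, ∫ y in C, ⟪Φ x, Φ y⟫ := by
    rw [real_inner_comm, ← integral_inner hΦB]
    refine integral_congr_ae (Filter.Eventually.of_forall fun x => ?_)
    simp only []
    rw [real_inner_comm, ← integral_inner hΦC]
  rw [h1, Measure.volume_eq_prod,
    setIntegral_prod _ (by rw [← Measure.volume_eq_prod]; exact hf.integrableOn)]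

lemma stmt8_prod_univ {K : ℕ → Set E} (hmono : Monotone K)
    (hU : (⋃ i, K i) = Set.univ) : (⋃ m, K m ×ˢ K m) = Set.univ := by
  ext p
  simp only [Set.mem_iUnion, Set.mem_univ, iff_true, Set.mem_prod]
  obtain ⟨i, hi⟩ : ∃ i, p.1 ∈ K i := by
    have : p.1 ∈ ⋃ i, K i := hU ▸ Set.mem_univ _
    exact Set.mem_iUnion.mp this
  obtain ⟨j, hj⟩ : ∃ j, p.2 ∈ K j := by
    have : p.2 ∈ ⋃ i, K i := hU ▸ Set.mem_univ _
    exact Set.mem_iUnion.mp this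
  exact ⟨max i j, hmono (le_max_left _ _) hi, hmono (le_max_right _ _) hj⟩

lemma stmt8_sq_le (Φ : E → H) (hΦ : Continuous Φ)
    (hf : Integrable (fun p : E × E => ⟪Φ p.1, Φ p.2⟫))
    {A B C : Set E} (hA : IsCompact A) (hB : IsCompact B) (hC : IsCompact C)
    (hAB : A ⊆ B) (hAC : A ⊆ C) :
    ‖(∫ x in B, Φ x) - ∫ x in C, Φ x‖ ^ 2 ≤
      4 * ∫ p in (A ×ˢ A)ᶜ, |⟪Φ p.1, Φ p.2⟫| := by
  have hmA : MeasurableSet (A ×ˢ A) := hA.measurableSet.prod hA.measurableSet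
  have key : ∀ {B' C' : Set E}, A ⊆ B' → A ⊆ C' →
      |(∫ p in B' ×ˢ C', ⟪Φ p.1, Φ p.2⟫) - ∫ p in A ×ˢ A, ⟪Φ p.1, Φ p.2⟫| ≤
        ∫ p in (A ×ˢ A)ᶜ, |⟪Φ p.1, Φ p.2⟫| := by
    intro B' C' h1 h2
    have hsub : A ×ˢ A ⊆ B' ×ˢ C' := Set.prod_mono h1 h2
    rw [← integral_diff hmA hf.integrableOn hsub]
    calc |∫ p in (B' ×ˢ C') \ (A ×ˢ A), ⟪Φ p.1, Φ p.2⟫|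
        ≤ ∫ p in (B' ×ˢ C') \ (A ×ˢ A), |⟪Φ p.1, Φ p.2⟫| := by
          simpa [Real.norm_eq_abs] using
            norm_integral_le_integral_norm (μ := volume.restrict ((B' ×ˢ C') \ (A ×ˢ A)))
              (fun p : E × E => ⟪Φ p.1, Φ p.2⟫)
      _ ≤ ∫ p in (A ×ˢ A)ᶜ, |⟪Φ p.1, Φ p.2⟫| := by
          refine setIntegral_mono_set hf.abs.integrableOn
            (Filter.Eventually.of_forall fun p => abs_nonneg _) ?_
          exact HasSubset.Subset.eventuallyLE (Set.diff_subset_compl _ _)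
  have eBB := stmt8_inner_setIntegral Φ hΦ hf hB hB
  have eBC := stmt8_inner_setIntegral Φ hΦ hf hB hC
  have eCC := stmt8_inner_setIntegral Φ hΦ hf hC hC
  have hsq : ‖(∫ x in B, Φ x) - ∫ x in C, Φ x‖ ^ 2 =
      (∫ p in B ×ˢ B, ⟪Φ p.1, Φ p.2⟫) - 2 * (∫ p in B ×ˢ C, ⟪Φ p.1, Φ p.2⟫)
        + ∫ p in C ×ˢ C, ⟪Φ p.1, Φ p.2⟫ := by
    rw [norm_sub_sq_real, ← real_inner_self_eq_norm_sq, ← real_inner_self_eq_norm_sq,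
      eBB, eBC, eCC]
  have k1 := key hAB hAB
  have k2 := key hAB hAC
  have k3 := key hAC hAC
  rw [abs_le] at k1 k2 k3
  rw [hsq]
  linarith [k1.1, k1.2, k2.1, k2.2, k3.1, k3.2]

lemma stmt8_eps_tendsto (F : E × E → ℝ) (hF : Integrable F)
    (K : ℕ → Set E) (hK : ∀ i, IsCompact (K i)) (hmono : Monotone K)
    (hU : (⋃ i, K i) = Set.univ) :
    Tendsto (fun m => ∫ p in (K m ×ˢ K m)ᶜ, F p) atTop (nhds 0) := by
  have hUm := stmt8_prod_univ hmono hU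
  have hmeas : ∀ m, MeasurableSet (K m ×ˢ K m) :=
    fun m => (hK m).measurableSet.prod (hK m).measurableSet
  have h1 : Tendsto (fun m => ∫ p in K m ×ˢ K m, F p) atTop (nhds (∫ p, F p)) := by
    have := tendsto_setIntegral_of_monotone hmeas
      (fun i j hij => Set.prod_mono (hmono hij) (hmono hij))
      (by rw [hUm]; exact hF.integrableOn)
    rwa [hUm, setIntegral_univ] at this
  have h2 : ∀ m, ∫ p in (K m ×ˢ K m)ᶜ, F p = (∫ p, F p) - ∫ p in K m ×ˢ K m, F p := by
    intro m
    rw [eq_sub_iff_add_eq, add_comm, integral_add_compl (hmeas m) hF]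
  have h3 := (tendsto_const_nhds (x := ∫ p, F p) (f := atTop (α := ℕ))).sub h1
  rw [sub_self] at h3
  exact h3.congr fun m => (h2 m).symm

end Stmt8Aux

/-- If `Φ : ℝⁿ → H` is continuous and `∫∫ |⟪Φ(x), Φ(y)⟫| dx dy < ∞`, then the
integrals over any increasing exhaustion by compact sets form a Cauchy sequence
converging to a limit `u` independent of the exhaustion, and
`⟪u, u⟫ = ∫∫ ⟪Φ(x), Φ(y)⟫ dx dy`. -/
theorem stmt8 (n : ℕ) {H : Type*} [NormedAddCommGroup H] [InnerProductSpace ℝ H]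
    [CompleteSpace H] (Φ : EuclideanSpace ℝ (Fin n) → H) (hΦ : Continuous Φ)
    (hint : Integrable (fun p : EuclideanSpace ℝ (Fin n) × EuclideanSpace ℝ (Fin n) =>
      abs ⟪Φ p.1, Φ p.2⟫)) :
    ∃ u : H,
      (∀ K : ℕ → Set (EuclideanSpace ℝ (Fin n)),
        (∀ i, IsCompact (K i)) → Monotone K → (⋃ i, K i) = Set.univ →
          CauchySeq (fun i => ∫ x in K i, Φ x) ∧
          Tendsto (fun i => ∫ x in K i, Φ x) atTop (nhds u)) ∧
      ⟪u, u⟫ = ∫ p : EuclideanSpace ℝ (Fin n) × EuclideanSpace ℝ (Fin n),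
        ⟪Φ p.1, Φ p.2⟫ := by
  have hfc : Continuous (fun p : EuclideanSpace ℝ (Fin n) × EuclideanSpace ℝ (Fin n) =>
      ⟪Φ p.1, Φ p.2⟫) := (hΦ.comp continuous_fst).inner (hΦ.comp continuous_snd)
  have hf : Integrable (fun p : EuclideanSpace ℝ (Fin n) × EuclideanSpace ℝ (Fin n) =>
      ⟪Φ p.1, Φ p.2⟫) := by
    refine (integrable_norm_iff hfc.aestronglyMeasurable).mp ?_
    simpa [Real.norm_eq_abs] using hint
  -- Cauchy criterion for an arbitrary exhaustion
  have key : ∀ K : ℕ → Set (EuclideanSpace ℝ (Fin n)), (∀ i, IsCompact (K i)) →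
      Monotone K → (⋃ i, K i) = Set.univ → CauchySeq (fun i => ∫ x in K i, Φ x) := by
    intro K hK hmono hU
    rw [Metric.cauchySeq_iff]
    intro ε hε
    have htd := stmt8_eps_tendsto _ hint K hK hmono hU
    have h4 : Tendsto (fun m => 4 * ∫ p in (K m ×ˢ K m)ᶜ, |⟪Φ p.1, Φ p.2⟫|) atTop (nhds 0) := by
      simpa using htd.const_mul 4
    obtain ⟨N, hN⟩ := (h4.eventually (gt_mem_nhds (show (0:ℝ) < ε ^ 2 by positivity))).exists
    refine ⟨N, fun i hi j hj => ?_⟩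
    have hsq := stmt8_sq_le Φ hΦ hf (hK N) (hK i) (hK j) (hmono hi) (hmono hj)
    rw [dist_eq_norm]
    nlinarith [norm_nonneg ((∫ x in K i, Φ x) - ∫ x in K j, Φ x)]
  -- base exhaustion by closed balls
  have hBc : ∀ i : ℕ, IsCompact (Metric.closedBall (0 : EuclideanSpace ℝ (Fin n)) i) :=
    fun i => isCompact_closedBall _ _
  have hBmono : Monotone (fun i : ℕ => Metric.closedBall (0 : EuclideanSpace ℝ (Fin n)) i) :=
    fun i j hij => Metric.closedBall_subset_closedBall (by exact_mod_cast hij)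
  have hBU : (⋃ i : ℕ, Metric.closedBall (0 : EuclideanSpace ℝ (Fin n)) i) = Set.univ := by
    ext x
    simp only [Set.mem_iUnion, Set.mem_univ, iff_true, Metric.mem_closedBall]
    exact ⟨⌈dist x 0⌉₊, Nat.le_ceil _⟩
  obtain ⟨u, hu⟩ := cauchySeq_tendsto_of_complete (key _ hBc hBmono hBU)
  refine ⟨u, fun K hK hmono hU => ⟨key K hK hmono hU, ?_⟩, ?_⟩
  · -- convergence to u for an arbitrary exhaustion
    rw [Metric.tendsto_atTop]
    intro ε hε
    set A : ℕ → Set (EuclideanSpace ℝ (Fin n)) :=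
      fun m => K m ∩ Metric.closedBall 0 m with hAdef
    have hAc : ∀ m, IsCompact (A m) := fun m => (hK m).inter_right Metric.isClosed_closedBall
    have hAmono : Monotone A := fun i j h => Set.inter_subset_inter (hmono h) (hBmono h)
    have hAU : (⋃ m, A m) = Set.univ := by
      ext x
      simp only [hAdef, Set.mem_iUnion, Set.mem_univ, iff_true, Set.mem_inter_iff,
        Metric.mem_closedBall]
      obtain ⟨i, hi⟩ : ∃ i, x ∈ K i := by
        have : x ∈ ⋃ i, K i := hU ▸ Set.mem_univ _
        exact Set.mem_iUnion.mp this
      refine ⟨max i ⌈dist x 0⌉₊, hmono (le_max_left _ _) hi, ?_⟩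
      exact (Nat.le_ceil _).trans (by exact_mod_cast Nat.le_max_right i ⌈dist x 0⌉₊)
    have htd := stmt8_eps_tendsto _ hint A hAc hAmono hAU
    have h4 : Tendsto (fun m => 4 * ∫ p in (A m ×ˢ A m)ᶜ, |⟪Φ p.1, Φ p.2⟫|) atTop (nhds 0) := by
      simpa using htd.const_mul 4
    obtain ⟨N, hN⟩ := (h4.eventually (gt_mem_nhds (show (0:ℝ) < (ε / 2) ^ 2 by positivity))).exists
    refine ⟨N, fun i hi => ?_⟩
    have hb : ∀ j, N ≤ j →
        dist (∫ x in K i, Φ x) (∫ x in Metric.closedBall (0 : EuclideanSpace ℝ (Fin n)) j, Φ x)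
          ≤ ε / 2 := by
      intro j hj
      have hsq := stmt8_sq_le Φ hΦ hf (hAc N) (hK i) (hBc j)
        (Set.inter_subset_left.trans (hmono hi)) (Set.inter_subset_right.trans (hBmono hj))
      rw [dist_eq_norm]
      nlinarith [norm_nonneg ((∫ x in K i, Φ x) -
        ∫ x in Metric.closedBall (0 : EuclideanSpace ℝ (Fin n)) j, Φ x)]
    have hle : dist (∫ x in K i, Φ x) u ≤ ε / 2 := by
      have hcont : Tendsto
          (fun j : ℕ => dist (∫ x in K i, Φ x)
            (∫ x in Metric.closedBall (0 : EuclideanSpace ℝ (Fin n)) j, Φ x))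
          atTop (nhds (dist (∫ x in K i, Φ x) u)) := tendsto_const_nhds.dist hu
      exact le_of_tendsto hcont (eventually_atTop.mpr ⟨N, hb⟩)
    linarith
  · -- the inner product identity
    have h1 : ∀ i : ℕ, ⟪∫ x in Metric.closedBall (0 : EuclideanSpace ℝ (Fin n)) i, Φ x,
        ∫ x in Metric.closedBall (0 : EuclideanSpace ℝ (Fin n)) i, Φ x⟫ =
        ∫ p in (Metric.closedBall (0 : EuclideanSpace ℝ (Fin n)) i ×ˢ
          Metric.closedBall (0 : EuclideanSpace ℝ (Fin n)) i), ⟪Φ p.1, Φ p.2⟫ :=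
      fun i => stmt8_inner_setIntegral Φ hΦ hf (hBc i) (hBc i)
    have hUm := stmt8_prod_univ hBmono hBU
    have h2 : Tendsto (fun i : ℕ => ∫ p in (Metric.closedBall (0 : EuclideanSpace ℝ (Fin n)) i ×ˢ
        Metric.closedBall (0 : EuclideanSpace ℝ (Fin n)) i), ⟪Φ p.1, Φ p.2⟫) atTop
        (nhds (∫ p : EuclideanSpace ℝ (Fin n) × EuclideanSpace ℝ (Fin n), ⟪Φ p.1, Φ p.2⟫)) := by
      have := tendsto_setIntegral_of_monotone
        (fun i => ((hBc i).measurableSet.prod (hBc i).measurableSet))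
        (fun i j hij => Set.prod_mono (hBmono hij) (hBmono hij))
        (by rw [hUm]; exact hf.integrableOn)
      rwa [hUm, setIntegral_univ] at this
    have h3 : Tendsto (fun i : ℕ => ⟪∫ x in Metric.closedBall (0 : EuclideanSpace ℝ (Fin n)) i,
        Φ x, ∫ x in Metric.closedBall (0 : EuclideanSpace ℝ (Fin n)) i, Φ x⟫) atTop
        (nhds ⟪u, u⟫) := hu.inner hu
    exact tendsto_nhds_unique h3 (h2.congr fun i => (h1 i).symm)
end

section
/- Let X be a locally compact space with a σ-finite regular Borel measure μ, H a Hilbert space, and Φ : X → H continuous with ∫∫_{X×X} |⟨Φ(x), Φ(y)⟩| dμ(x) dμ(y) < ∞. Then for any increasing sequence of compact sets K_i with μ(X − ∪K_i) = 0, the integrals ∫_{K_i} Φ dμ form a Cauchy sequence in H converging to a limit u with ⟨u, u⟩ = ∫∫_{X×X} ⟨Φ(x), Φ(y)⟩ dμ(x) dμ(y). -/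
open MeasureTheory Filter RealInnerProductSpace

/-- Let `X` be locally compact with a σ-finite regular Borel measure `μ`, and
`Φ : X → H` continuous with `∫∫ |⟪Φ(x), Φ(y)⟫| dμ dμ < ∞`.  Then for any
increasing sequence of compact sets `K i` whose union has full measure, the
integrals `∫_{K i} Φ dμ` form a Cauchy sequence converging to a limit `u`
with `⟪u, u⟫ = ∫∫ ⟪Φ(x), Φ(y)⟫ dμ dμ`. -/
theorem stmt9 {X : Type*} [TopologicalSpace X] [LocallyCompactSpace X]
    [MeasurableSpace X] [BorelSpace X]
    {H : Type*} [NormedAddCommGroup H] [InnerProductSpace ℝ H] [CompleteSpace H]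
    (μ : Measure X) [SigmaFinite μ] [μ.Regular]
    (Φ : X → H) (hΦ : Continuous Φ)
    (hint : Integrable (fun p : X × X => abs ⟪Φ p.1, Φ p.2⟫) (μ.prod μ)) :
    ∀ K : ℕ → Set X, (∀ i, IsCompact (K i)) → Monotone K →
      μ (Set.univ \ ⋃ i, K i) = 0 →
      CauchySeq (fun i => ∫ x in K i, Φ x ∂μ) ∧
      ∃ u : H, Tendsto (fun i => ∫ x in K i, Φ x ∂μ) atTop (nhds u) ∧
        ⟪u, u⟫ = ∫ p : X × X, ⟪Φ p.1, Φ p.2⟫ ∂(μ.prod μ) := by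
  intro K hK hKmono hKnull
  set F : X × X → ℝ := fun p => ⟪Φ p.1, Φ p.2⟫ with hFdef
  have hΦaesm : AEStronglyMeasurable Φ μ := by
    borelize H
    rw [aestronglyMeasurable_iff_aemeasurable_separable]
    refine ⟨hΦ.measurable.aemeasurable, closure (Φ '' ⋃ i, K i), ?_, ?_⟩
    · refine TopologicalSpace.IsSeparable.closure ?_
      rw [Set.image_iUnion]
      exact TopologicalSpace.IsSeparable.iUnion fun i => ((hK i).image hΦ).isSeparable
    · rw [ae_iff]
      refine measure_mono_null ?_ hKnull
      intro x hx
      simp only [Set.mem_setOf_eq] at hx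
      exact ⟨Set.mem_univ _, fun hxU => hx (subset_closure (Set.mem_image_of_mem Φ hxU))⟩
  have qfst : Measure.QuasiMeasurePreserving (Prod.fst : X × X → X) (μ.prod μ) μ :=
    ⟨measurable_fst, by rw [Measure.map_fst_prod]; exact Measure.smul_absolutelyContinuous⟩
  have qsnd : Measure.QuasiMeasurePreserving (Prod.snd : X × X → X) (μ.prod μ) μ :=
    ⟨measurable_snd, by rw [Measure.map_snd_prod]; exact Measure.smul_absolutelyContinuous⟩
  have hFaesm : AEStronglyMeasurable F (μ.prod μ) :=
    (hΦaesm.comp_quasiMeasurePreserving qfst).inner (hΦaesm.comp_quasiMeasurePreserving qsnd)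
  have hF : Integrable F (μ.prod μ) := by
    refine hint.mono' hFaesm ?_
    filter_upwards with p
    simp [Real.norm_eq_abs, hFdef]
  have hKfin : ∀ i, μ (K i) ≠ ⊤ := fun i => (hK i).measure_lt_top.ne
  -- measurable monotone replacement for K
  set L : ℕ → Set X := fun i => ⋂ j ∈ Set.Ici i, toMeasurable μ (K j) with hLdef
  have hLmeas : ∀ i, MeasurableSet (L i) := fun i =>
    MeasurableSet.biInter (Set.to_countable _) fun j _ => measurableSet_toMeasurable μ (K j)
  have hKL : ∀ i, K i ⊆ L i := fun i =>
    Set.subset_iInter₂ fun j hj => (hKmono hj).trans (subset_toMeasurable μ (K j))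
  have hLsub : ∀ i, L i ⊆ toMeasurable μ (K i) := fun i =>
    Set.biInter_subset_of_mem Set.self_mem_Ici
  have hLmono : Monotone L := fun a b hab =>
    Set.biInter_subset_biInter_left (Set.Ici_subset_Ici.2 hab)
  have hres : ∀ i, μ.restrict (L i) = μ.restrict (K i) := by
    intro i
    have h1 : μ.restrict (toMeasurable μ (K i)) = μ.restrict (K i) :=
      Measure.restrict_toMeasurable (hKfin i)
    refine Measure.ext fun t ht => ?_
    rw [Measure.restrict_apply ht, Measure.restrict_apply ht]
    refine le_antisymm ?_ (measure_mono (Set.inter_subset_inter_right _ (hKL i)))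
    calc μ (t ∩ L i) ≤ μ (t ∩ toMeasurable μ (K i)) :=
          measure_mono (Set.inter_subset_inter_right _ (hLsub i))
      _ = μ (t ∩ K i) := by
          rw [← Measure.restrict_apply ht, h1, Measure.restrict_apply ht]
  -- integrability of Φ on the L i
  have hΦint : ∀ i, IntegrableOn Φ (L i) μ := by
    intro i
    rw [IntegrableOn, hres i]
    obtain ⟨C, hC⟩ : ∃ C, ∀ x ∈ K i, ‖Φ x‖ ≤ C :=
      (hK i).exists_bound_of_continuousOn hΦ.continuousOn
    haveI : IsFiniteMeasure (μ.restrict (K i)) :=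
      ⟨by rw [Measure.restrict_apply_univ]; exact (hK i).measure_lt_top⟩
    refine ⟨hΦaesm.restrict, ?_⟩
    refine HasFiniteIntegral.of_bounded (C := C) ?_
    rw [ae_iff, Measure.restrict_apply]
    · have : {x | ¬ ‖Φ x‖ ≤ C} ∩ K i = ∅ := by
        ext x; simp only [Set.mem_inter_iff, Set.mem_setOf_eq, Set.mem_empty_iff_false,
          iff_false, not_and]
        intro hx hxK; exact hx (hC x hxK)
      rw [this, measure_empty]
    · have : {x | ¬ ‖Φ x‖ ≤ C} = {x | C < ‖Φ x‖} := by ext x; simp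
      rw [this]
      exact measurableSet_lt measurable_const hΦ.norm.measurable
  -- rewrite the sequence using L
  have hvw : (fun i => ∫ x in K i, Φ x ∂μ) = fun i => ∫ x in L i, Φ x ∂μ := by
    funext i; rw [hres i]
  set w : ℕ → H := fun i => ∫ x in L i, Φ x ∂μ with hwdef
  -- key identity: inner product of set integrals
  have key : ∀ s t : Set X, IntegrableOn Φ s μ → IntegrableOn Φ t μ →
      ⟪∫ x in s, Φ x ∂μ, ∫ x in t, Φ x ∂μ⟫ = ∫ p in s ×ˢ t, F p ∂(μ.prod μ) := by
    intro s t hfs hft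
    rw [← Measure.prod_restrict,
      integral_prod _ (by rw [Measure.prod_restrict]; exact hF.integrableOn)]
    calc ⟪∫ x in s, Φ x ∂μ, ∫ x in t, Φ x ∂μ⟫
        = ∫ x in s, ⟪(∫ y in t, Φ y ∂μ), Φ x⟫ ∂μ := by
          rw [integral_inner hfs, real_inner_comm]
      _ = ∫ x in s, ⟪Φ x, ∫ y in t, Φ y ∂μ⟫ ∂μ := by simp_rw [real_inner_comm]
      _ = ∫ x in s, ∫ y in t, F (x, y) ∂μ ∂μ :=
          integral_congr_ae (Eventually.of_forall fun x => (integral_inner hft (Φ x)).symm)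
  -- the union and its full measure
  set U : Set X := ⋃ i, L i with hUdef
  have hUmeas : MeasurableSet U := MeasurableSet.iUnion hLmeas
  have hUnull : μ Uᶜ = 0 := by
    refine measure_mono_null ?_ hKnull
    rw [Set.compl_eq_univ_diff]
    exact Set.diff_subset_diff_right (Set.iUnion_mono hKL)
  have hU2 : (μ.prod μ) ((U ×ˢ U)ᶜ) = 0 := by
    have hsub : (U ×ˢ U)ᶜ ⊆ (Uᶜ ×ˢ (Set.univ : Set X)) ∪ ((Set.univ : Set X) ×ˢ Uᶜ) := by
      intro p hp
      simp only [Set.mem_compl_iff, Set.mem_prod, not_and] at hp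
      by_cases h1 : p.1 ∈ U
      · exact Or.inr ⟨Set.mem_univ _, hp h1⟩
      · exact Or.inl ⟨h1, Set.mem_univ _⟩
    refine measure_mono_null hsub (measure_union_null ?_ ?_) <;>
      simp [Measure.prod_prod, hUnull]
  have hfull : ∀ G : X × X → ℝ, Integrable G (μ.prod μ) →
      ∫ p in U ×ˢ U, G p ∂(μ.prod μ) = ∫ p, G p ∂(μ.prod μ) := by
    intro G hG
    have h0 : ∫ p in (U ×ˢ U)ᶜ, G p ∂(μ.prod μ) = 0 := by
      rw [Measure.restrict_eq_zero.2 hU2, integral_zero_measure]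
    have := integral_add_compl (hUmeas.prod hUmeas) hG
    rw [h0, add_zero] at this
    exact this
  have hprodmeas : ∀ i, MeasurableSet (L i ×ˢ L i) := fun i => (hLmeas i).prod (hLmeas i)
  have hprodmono : Monotone fun i => L i ×ˢ L i := fun a b hab =>
    Set.prod_mono (hLmono hab) (hLmono hab)
  have hprodUnion : (⋃ i, L i ×ˢ L i) = U ×ˢ U := Set.iUnion_prod_of_monotone hLmono hLmono
  -- convergence of set integrals of |F| and of F
  set A : ℕ → ℝ := fun i => ∫ p in L i ×ˢ L i, |F p| ∂(μ.prod μ) with hAdef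
  have hAtend : Tendsto A atTop (nhds (∫ p, |F p| ∂(μ.prod μ))) := by
    have := tendsto_setIntegral_of_monotone hprodmeas hprodmono
      (f := fun p => |F p|) (by rw [hprodUnion]; exact hint.integrableOn)
    rwa [hprodUnion, hfull _ hint] at this
  set g : ℕ → ℝ := fun i => (∫ p, |F p| ∂(μ.prod μ)) - A i with hgdef
  have hgtend : Tendsto g atTop (nhds 0) := by
    have := (tendsto_const_nhds (x := ∫ p, |F p| ∂(μ.prod μ)) (f := atTop (α := ℕ))).sub hAtend
    rwa [sub_self] at this
  have hganti : Antitone g := by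
    intro a b hab
    refine sub_le_sub_left ?_ _
    exact setIntegral_mono_set hint.integrableOn
      (Eventually.of_forall fun p => abs_nonneg _)
      (HasSubset.Subset.eventuallyLE (hprodmono hab))
  have hgcompl : ∀ i, ∫ p in (L i ×ˢ L i)ᶜ, |F p| ∂(μ.prod μ) = g i := by
    intro i
    have := integral_add_compl (hprodmeas i) hint
    simp only [hgdef, hAdef]
    linarith [this]
  -- the key bound
  have hbound : ∀ i j, i ≤ j → ‖w j - w i‖ ^ 2 ≤ g i := by
    intro i j hij
    have hdiff : w j - w i = ∫ x in L j \ L i, Φ x ∂μ :=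
      (integral_diff (hLmeas i) (hΦint j) (hLmono hij)).symm
    have hD : IntegrableOn Φ (L j \ L i) μ := (hΦint j).mono_set Set.diff_subset
    have h1 : ‖w j - w i‖ ^ 2 = ∫ p in (L j \ L i) ×ˢ (L j \ L i), F p ∂(μ.prod μ) := by
      rw [← real_inner_self_eq_norm_sq, hdiff, key _ _ hD hD]
    have h2 : ∫ p in (L j \ L i) ×ˢ (L j \ L i), F p ∂(μ.prod μ)
        ≤ ∫ p in (L j \ L i) ×ˢ (L j \ L i), |F p| ∂(μ.prod μ) :=
      integral_mono hF.integrableOn hint.integrableOn fun p => le_abs_self _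
    have h3 : ∫ p in (L j \ L i) ×ˢ (L j \ L i), |F p| ∂(μ.prod μ)
        ≤ ∫ p in (L i ×ˢ L i)ᶜ, |F p| ∂(μ.prod μ) := by
      refine setIntegral_mono_set hint.integrableOn
        (Eventually.of_forall fun p => abs_nonneg _)
        (HasSubset.Subset.eventuallyLE ?_)
      intro p hp
      simp only [Set.mem_prod, Set.mem_diff] at hp
      simp only [Set.mem_compl_iff, Set.mem_prod, not_and]
      intro h; exact absurd h hp.1.2
    rw [h1, ← hgcompl i]
    exact h2.trans h3
  have hCauchy : CauchySeq w := by
    refine cauchySeq_of_le_tendsto_0 (fun N => Real.sqrt (g N)) ?_ ?_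
    · intro n m N hn hm
      rcases le_total n m with h | h
      · rw [dist_comm, dist_eq_norm]
        exact Real.le_sqrt_of_sq_le ((hbound n m h).trans (hganti hn))
      · rw [dist_eq_norm]
        exact Real.le_sqrt_of_sq_le ((hbound m n h).trans (hganti hm))
    · have : Tendsto Real.sqrt (nhds 0) (nhds 0) := by
        simpa using Real.continuous_sqrt.tendsto 0
      exact this.comp hgtend
  obtain ⟨u, hu⟩ := cauchySeq_tendsto_of_complete hCauchy
  refine ⟨by rw [hvw]; exact hCauchy, u, by rw [hvw]; exact hu, ?_⟩
  have t1 : Tendsto (fun i => ⟪w i, w i⟫) atTop (nhds ⟪u, u⟫) := hu.inner hu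
  have t2 : Tendsto (fun i => ⟪w i, w i⟫) atTop (nhds (∫ p, F p ∂(μ.prod μ))) := by
    have h := tendsto_setIntegral_of_monotone hprodmeas hprodmono
      (f := F) (by rw [hprodUnion]; exact hF.integrableOn)
    rw [hprodUnion, hfull _ hF] at h
    refine h.congr fun i => ?_
    exact (key _ _ (hΦint i) (hΦint i)).symm
  exact tendsto_nhds_unique t1 t2
end

section
/- Define the symplectic segment I_-(m) = (m/2, m/2 − 1, ..., m/2 + 1 − ⌊(m+1)/2⌋) of length ⌊(m+1)/2⌋ and the orthogonal segment I_+(r) = (r/2 − 1, r/2 − 2, ..., r/2 − ⌊r/2⌋) of length ⌊r/2⌋. Suppose m ≡ r (mod 2) and 0 ≤ r ≤ m. Then the decreasing rearrangement of the concatenation (I_-(m), I_+(r)) is ⪯ (m/(m+r))·I_-(m+r). -/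
/-- The symplectic segment `I₋(k) = (k/2, k/2 − 1, …, k/2 + 1 − ⌊(k+1)/2⌋)`. -/
noncomputable def IminusL (k : ℕ) : List ℝ := (List.range ((k + 1) / 2)).map fun i => (k : ℝ) / 2 - i

/-- The orthogonal segment `I₊(k) = (k/2 − 1, k/2 − 2, …, k/2 − ⌊k/2⌋)`. -/
noncomputable def IplusL (k : ℕ) : List ℝ := (List.range (k / 2)).map fun i => (k : ℝ) / 2 - 1 - i

/- ### Auxiliary lemmas -/

lemma aux_flat (l : List ℕ) (f : ℝ → ℝ) :
    List.map f (do let a ← l; pure (a : ℝ)) = l.map fun i : ℕ => f i := by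
  induction l with
  | nil => rfl
  | cons x l ih => simp_all

lemma IminusL_eq (k : ℕ) :
    IminusL k = (List.range ((k + 1) / 2)).map fun i : ℕ => (k : ℝ) / 2 - (i : ℝ) := by
  unfold IminusL
  exact aux_flat _ _

lemma IplusL_eq (k : ℕ) :
    IplusL k = (List.range (k / 2)).map fun i : ℕ => (k : ℝ) / 2 - 1 - (i : ℝ) := by
  unfold IplusL
  exact aux_flat _ _

lemma aux_take_sum_le (L : List ℝ) : ∀ (k : ℕ) (t : ℝ), k ≤ L.length →
    (L.take k).sum ≤ k * t + (L.map fun x => max (x - t) 0).sum := by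
  induction L with
  | nil =>
    intro k t hk
    simp at hk
    subst hk
    simp
  | cons x L ih =>
    intro k t hk
    match k with
    | 0 =>
      have h0 : (0 : ℝ) ≤ ((x :: L).map fun x => max (x - t) 0).sum := by
        apply List.sum_nonneg
        intro y hy
        simp only [List.mem_map] at hy
        obtain ⟨z, _, rfl⟩ := hy
        exact le_max_right _ _
      simpa using h0
    | k + 1 =>
      have hk' : k ≤ L.length := by simpa using hk
      have h1 := ih k t hk'
      have h2 : x ≤ t + max (x - t) 0 := by
        have := le_max_left (x - t) 0
        linarith
      simp only [List.take_succ_cons, List.sum_cons, List.map_cons]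
      push_cast
      linarith

lemma aux_map_range_sum (f : ℕ → ℝ) (n : ℕ) :
    ((List.range n).map f).sum = ∑ i ∈ Finset.range n, f i := by
  induction n with
  | zero => simp
  | succ n ih => rw [List.range_succ, Finset.sum_range_succ, ← ih]; simp

lemma aux_nat_tri (u : ℕ) : (∑ i ∈ Finset.range u, (u - i)) * 2 = u * (u + 1) := by
  induction u with
  | zero => simp
  | succ u ih =>
    have h : ∀ i ∈ Finset.range (u + 1), (u + 1 - i) = (u - i) + 1 := by
      intro i hi
      simp only [Finset.mem_range] at hi
      omega
    calc (∑ i ∈ Finset.range (u + 1), (u + 1 - i)) * 2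
        = ((∑ i ∈ Finset.range (u + 1), (u - i)) + (u + 1)) * 2 := by
          rw [Finset.sum_congr rfl h, Finset.sum_add_distrib]
          simp
      _ = ((∑ i ∈ Finset.range u, (u - i)) + (u + 1)) * 2 := by
          rw [Finset.sum_range_succ]
          simp
      _ = (∑ i ∈ Finset.range u, (u - i)) * 2 + (u + 1) * 2 := by ring
      _ = u * (u + 1) + (u + 1) * 2 := by rw [ih]
      _ = (u + 1) * (u + 1 + 1) := by ring

lemma aux_nat_tri' (n u : ℕ) (h : u ≤ n) :
    (∑ i ∈ Finset.range n, (u - i)) * 2 = u * (u + 1) := by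
  rw [← aux_nat_tri u]
  congr 1
  symm
  apply Finset.sum_subset (Finset.range_subset_range.mpr h)
  intro i _ hi
  simp at hi
  omega

lemma aux_term_eq (u i : ℕ) : max ((u : ℝ) - i) 0 = ((u - i : ℕ) : ℝ) := by
  rcases le_total i u with h | h
  · rw [max_eq_left, Nat.cast_sub h]
    rw [sub_nonneg]
    exact_mod_cast h
  · rw [max_eq_right, Nat.sub_eq_zero_of_le h, Nat.cast_zero]
    rw [sub_nonpos]
    exact_mod_cast h

lemma aux_clip_eval (n u : ℕ) (h : u ≤ n) :
    (∑ i ∈ Finset.range n, max ((u : ℝ) - i) 0) = u * (u + 1) / 2 := by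
  have h1 : (∑ i ∈ Finset.range n, max ((u : ℝ) - i) 0)
      = ((∑ i ∈ Finset.range n, (u - i) : ℕ) : ℝ) := by
    rw [Nat.cast_sum]
    exact Finset.sum_congr rfl fun i _ => aux_term_eq u i
  rw [h1]
  have h2 := aux_nat_tri' n u h
  have h3 : ((∑ i ∈ Finset.range n, (u - i) : ℕ) : ℝ) * 2 = (u : ℝ) * ((u : ℝ) + 1) := by
    exact_mod_cast congrArg (Nat.cast : ℕ → ℝ) h2
  linarith

lemma aux_gauss (k : ℕ) : (∑ i ∈ Finset.range k, (i : ℝ)) = k * ((k : ℝ) - 1) / 2 := by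
  match k with
  | 0 => simp
  | k + 1 =>
    have h := Finset.sum_range_id_mul_two (k + 1)
    have h2 : ((∑ i ∈ Finset.range (k + 1), i : ℕ) : ℝ) * 2 = ((k + 1) * k : ℕ) := by
      exact_mod_cast congrArg (Nat.cast : ℕ → ℝ) h
    rw [Nat.cast_sum] at h2
    push_cast at h2 ⊢
    linarith

lemma aux_coreA (m r k : ℝ) (hk : 1 ≤ k) (hr : 0 ≤ r) :
    (k * (m / 2 - k) + k * (k + 1) / 2 + 0 * (0 + 1) / 2) * (m + r)
      ≤ m * (k * (m + r) / 2 - k * (k - 1) / 2) := by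
  nlinarith [mul_nonneg (mul_nonneg (by linarith : (0:ℝ) ≤ k) (by linarith : (0:ℝ) ≤ k - 1)) hr]

lemma aux_coreB (x y v c e : ℝ) (hx : 0 ≤ x) (hy : 0 ≤ y) (hv : 0 ≤ v)
    (hc : c = 0 ∨ c = 1) (he : e = 0 ∨ e = 1) :
    ((x + 1 + 2 * v + e) * ((2 * (x + y + v) + c) / 2 - (x + 1 + v))
        + (x + 1 + v) * ((x + 1 + v) + 1) / 2 + v * (v + 1) / 2)
        * ((2 * (x + y + v) + c) + (2 * (y + v) + c))
      ≤ (2 * (x + y + v) + c) *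
        ((x + 1 + 2 * v + e) * ((2 * (x + y + v) + c) + (2 * (y + v) + c)) / 2
          - (x + 1 + 2 * v + e) * ((x + 1 + 2 * v + e) - 1) / 2) := by
  rcases hc with rfl | rfl <;> rcases he with rfl | rfl <;>
    nlinarith [mul_nonneg hx hy, mul_nonneg hx hv, mul_nonneg hy hv,
      mul_nonneg (mul_nonneg hx hy) hv, mul_nonneg (mul_nonneg hx hv) hv,
      mul_nonneg (mul_nonneg hx hx) hv, mul_nonneg (mul_nonneg hx hx) hy,
      mul_nonneg hv hv]

lemma aux_cast_sub_max (a b j : ℕ) :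
    max ((a : ℝ) - b - j) 0 = max (((a - b : ℕ) : ℝ) - j) 0 := by
  rcases le_total b a with h | h
  · rw [Nat.cast_sub h]
  · rw [Nat.sub_eq_zero_of_le h, Nat.cast_zero]
    have hab : (a : ℝ) ≤ b := by exact_mod_cast h
    have hj : (0 : ℝ) ≤ j := Nat.cast_nonneg j
    rw [max_eq_right (by linarith), max_eq_right (by linarith)]

/-- The key upper bound on the partial sum, for a suitable threshold `u`. -/
lemma aux_chain (m r k u e : ℕ) (B : List ℝ)
    (hperm : (IminusL m ++ IplusL r).Perm B) (hkB : k ≤ B.length)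
    (hme : m = r + 2 * e)
    (hun : u ≤ (m + 1) / 2) (hvs : u - (e + 1) ≤ r / 2) :
    (B.take k).sum ≤ k * ((m : ℝ) / 2 - u) + (u : ℝ) * ((u : ℝ) + 1) / 2
      + ((u - (e + 1) : ℕ) : ℝ) * (((u - (e + 1) : ℕ) : ℝ) + 1) / 2 := by
  set t : ℝ := (m : ℝ) / 2 - u with ht
  have h1 := aux_take_sum_le B k t hkB
  have h2 : (B.map fun x => max (x - t) 0).sum
      = ((IminusL m ++ IplusL r).map fun x => max (x - t) 0).sum :=
    ((hperm.map _).sum_eq).symm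
  rw [h2, List.map_append, List.sum_append] at h1
  have hM : ((IminusL m).map fun x => max (x - t) 0).sum
      = (u : ℝ) * ((u : ℝ) + 1) / 2 := by
    rw [IminusL_eq, List.map_map, aux_map_range_sum]
    rw [← aux_clip_eval ((m + 1) / 2) u hun]
    apply Finset.sum_congr rfl
    intro i _
    simp only [Function.comp_apply]
    rw [show (m : ℝ) / 2 - i - t = (u : ℝ) - i by rw [ht]; ring]
  have hP : ((IplusL r).map fun x => max (x - t) 0).sum
      = ((u - (e + 1) : ℕ) : ℝ) * (((u - (e + 1) : ℕ) : ℝ) + 1) / 2 := by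
    rw [IplusL_eq, List.map_map, aux_map_range_sum]
    rw [← aux_clip_eval (r / 2) (u - (e + 1)) hvs]
    apply Finset.sum_congr rfl
    intro j _
    simp only [Function.comp_apply]
    have hmr : (m : ℝ) = (r : ℝ) + 2 * (e : ℝ) := by exact_mod_cast hme
    rw [show (r : ℝ) / 2 - 1 - j - t = (u : ℝ) - ((e + 1 : ℕ) : ℝ) - j by
      rw [ht]; push_cast; rw [hmr]; ring]
    exact aux_cast_sub_max u (e + 1) j
  rw [hM, hP] at h1
  linarith [h1]

/-- If `m ≡ r (mod 2)` and `0 ≤ r ≤ m`, the decreasing rearrangement `B` of the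
concatenation `(I₋(m), I₊(r))` satisfies `B ⪯ (m/(m+r))·I₋(m+r)`, i.e. all
initial partial sums of `B` are dominated by those of the scaled segment. -/
theorem stmt10 (m r : ℕ) (hpar : m % 2 = r % 2) (hrm : r ≤ m)
    (B : List ℝ) (hperm : (IminusL m ++ IplusL r).Perm B)
    (hsort : B.Pairwise (· ≥ ·)) :
    ∀ k, k ≤ B.length →
      (B.take k).sum ≤ (((IminusL (m + r)).map fun x => (m : ℝ) / (m + r) * x).take k).sum := by
  intro k hk
  have hlen : B.length = (m + 1) / 2 + r / 2 := by
    rw [← hperm.length_eq]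
    simp [IminusL_eq, IplusL_eq]
  rcases Nat.eq_zero_or_pos k with rfl | hk1
  · simp
  have hm1 : 1 ≤ m := by
    rcases Nat.eq_zero_or_pos m with rfl | h
    · omega
    · exact h
  obtain ⟨e, hme⟩ : ∃ e, m = r + 2 * e := ⟨(m - r) / 2, by omega⟩
  have hkN : k ≤ (m + r + 1) / 2 := by omega
  have hp : (0 : ℝ) < ((m + r : ℕ) : ℝ) := by
    exact_mod_cast Nat.pos_of_ne_zero (by omega)
  -- evaluate the right-hand side
  have hRHS : (((IminusL (m + r)).map fun x => (m : ℝ) / (m + r) * x).take k).sum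
      = ((m : ℝ) / ((m + r : ℕ) : ℝ)) *
        ((k : ℝ) * ((m + r : ℕ) : ℝ) / 2 - (k : ℝ) * ((k : ℝ) - 1) / 2) := by
    rw [IminusL_eq, List.map_map, ← List.map_take, List.take_range, min_eq_left hkN,
      aux_map_range_sum]
    have hsum : ∑ i ∈ Finset.range k, (((m + r : ℕ) : ℝ) / 2 - (i : ℝ))
        = (k : ℝ) * ((m + r : ℕ) : ℝ) / 2 - (k : ℝ) * ((k : ℝ) - 1) / 2 := by
      rw [Finset.sum_sub_distrib, Finset.sum_const, Finset.card_range, aux_gauss,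
        nsmul_eq_mul]
      ring
    rw [← hsum, Finset.mul_sum]
    apply Finset.sum_congr rfl
    intro i _
    simp only [Function.comp_apply]
    push_cast
    ring
  have hmr : ((m + r : ℕ) : ℝ) = (m : ℝ) + (r : ℝ) := by push_cast; ring
  rcases le_or_gt k (e + 1) with hkd | hkd
  · -- small k : choose u = k
    have hun : k ≤ (m + 1) / 2 := by omega
    have hchain := aux_chain m r k k e B hperm hk hme hun (by omega)
    have hveq : k - (e + 1) = 0 := by omega
    rw [hveq] at hchain
    refine hchain.trans ?_
    rw [hRHS, div_mul_eq_mul_div, le_div_iff₀ hp]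
    have H := aux_coreA (m : ℝ) (r : ℝ) (k : ℝ)
      (by exact_mod_cast hk1) (Nat.cast_nonneg r)
    rw [hmr]
    push_cast
    linarith [H]
  · -- large k : choose u = e + 1 + (k - (e+1))/2
    set v : ℕ := (k - (e + 1)) / 2 with hv
    set u : ℕ := e + 1 + v with hu
    set eps : ℕ := k - (e + 1) - 2 * v with heps
    set y : ℕ := r / 2 - v with hy
    set c : ℕ := r % 2 with hc
    have hvs : v ≤ r / 2 := by omega
    have hun : u ≤ (m + 1) / 2 := by omega
    have hveq : u - (e + 1) = v := by omega
    have hchain := aux_chain m r k u e B hperm hk hme hun (by omega)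
    rw [hveq] at hchain
    refine hchain.trans ?_
    rw [hRHS, div_mul_eq_mul_div, le_div_iff₀ hp]
    have hcc : (c : ℝ) = 0 ∨ (c : ℝ) = 1 := by
      have : c = 0 ∨ c = 1 := by omega
      rcases this with h | h <;> [left; right] <;> rw [h] <;> norm_num
    have hee : (eps : ℝ) = 0 ∨ (eps : ℝ) = 1 := by
      have : eps = 0 ∨ eps = 1 := by omega
      rcases this with h | h <;> [left; right] <;> rw [h] <;> norm_num
    have H := aux_coreB (e : ℝ) (y : ℝ) (v : ℝ) (c : ℝ) (eps : ℝ)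
      (Nat.cast_nonneg e) (Nat.cast_nonneg y) (Nat.cast_nonneg v) hcc hee
    have em : (m : ℝ) = 2 * ((e : ℝ) + (y : ℝ) + (v : ℝ)) + (c : ℝ) := by
      exact_mod_cast (show m = 2 * (e + y + v) + c by omega)
    have er : (r : ℝ) = 2 * ((y : ℝ) + (v : ℝ)) + (c : ℝ) := by
      exact_mod_cast (show r = 2 * (y + v) + c by omega)
    have ek : (k : ℝ) = (e : ℝ) + 1 + 2 * (v : ℝ) + (eps : ℝ) := by
      exact_mod_cast (show k = e + 1 + 2 * v + eps by omega)
    have eu : (u : ℝ) = (e : ℝ) + 1 + (v : ℝ) := by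
      exact_mod_cast (show u = e + 1 + v by omega)
    rw [← em, ← er, ← ek, ← eu] at H
    rw [hmr]
    push_cast
    nlinarith [H]
end

section
/- Let m, j, m_0, r be integers with m ≡ m_0 ≡ r (mod 2), m − 2j ≥ m_0 ≥ r ≥ 0, j ≥ 0, m_0 ≥ 1, r ≥ 1. Then (m_0+1)(m−m_0−1) + (r−1)(m−r+1) + 2(m−j) + 2·Σ_{s=0}^{j−1} (m−2s)(2s) ≥ 0. -/
/-- The key nonnegativity inequality in the infinitesimal-character estimate
for `Mp_{2n}(ℝ)`: if `m ≡ m₀ ≡ r (mod 2)`, `m − 2j ≥ m₀ ≥ r ≥ 1`, then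
`(m₀+1)(m−m₀−1) + (r−1)(m−r+1) + 2(m−j) + 2·Σ_{s=0}^{j−1}(m−2s)(2s) ≥ 0`. -/
theorem stmt12 (m m0 r : ℤ) (j : ℕ)
    (h1 : m % 2 = m0 % 2) (h2 : m0 % 2 = r % 2)
    (h3 : m0 ≤ m - 2 * j) (h4 : r ≤ m0) (h5 : 1 ≤ r) (h6 : 1 ≤ m0) :
    0 ≤ (m0 + 1) * (m - m0 - 1) + (r - 1) * (m - r + 1) + 2 * (m - j)
        + 2 * ∑ s ∈ Finset.range j, (m - 2 * s) * (2 * s) := by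
  have hS : 0 ≤ ∑ s ∈ Finset.range j, (m - 2 * s) * (2 * s) := by
    apply Finset.sum_nonneg
    intro s hs
    simp only [Finset.mem_range] at hs
    have hs' : (s : ℤ) < (j : ℤ) := by exact_mod_cast hs
    have hs0 : (0 : ℤ) ≤ (s : ℤ) := by positivity
    nlinarith
  obtain ⟨k, hk⟩ : ∃ k : ℤ, m = m0 + 2 * k := ⟨(m - m0) / 2, by omega⟩
  have hkj : (j : ℤ) ≤ k := by omega
  have hj0 : (0 : ℤ) ≤ (j : ℤ) := by positivity
  rcases eq_or_lt_of_le (le_trans hj0 hkj) with h | h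
  · have : (j : ℤ) = 0 := by omega
    nlinarith
  · nlinarith [mul_nonneg (show (0:ℤ) ≤ r - 1 by omega) (show (0:ℤ) ≤ m - r + 1 by omega)]
end
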